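/- arXiv:math/0506248 — 3 statements merged into one kernel-verified Lean document; each statement's English description precedes it below -/
import Mathlib

section
/- The formal power series Y(q) = Σ_{n≥1} n^{n-1} q^n / n! satisfies the functional equation Y = q·e^Y. -/
section AbelPart
open Polynomial Finset


lemma shift_sub_natDegree_lt (p : ℚ[X]) (hp : 0 < p.natDegree) :
    (p.comp (X + C 1) - p).natDegree < p.natDegree := by
  by_cases h : p.comp (X + C 1) - p = 0
  · rw [h]; simpa using hp
  · have hp0 : p ≠ 0 := fun h0 => by simp [h0] at hp
    have hnd : (p.comp (X + C 1)).natDegree = p.natDegree := by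
      rw [natDegree_comp, natDegree_X_add_C, mul_one]
    have hc0 : p.comp (X + C 1) ≠ 0 := fun h0 => by
      rw [h0] at hnd; simp at hnd; omega
    have hdeg : (p.comp (X + C 1)).degree = p.degree := by
      rw [degree_eq_natDegree hc0, degree_eq_natDegree hp0, hnd]
    have hlc : (p.comp (X + C 1)).leadingCoeff = p.leadingCoeff := by
      rw [leadingCoeff_comp (by rw [natDegree_X_add_C]; omega), leadingCoeff_X_add_C,
        one_pow, mul_one]
    have hlt := degree_sub_lt hdeg hc0 hlc
    rw [hdeg] at hlt
    exact natDegree_lt_natDegree h hlt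

lemma findiff : ∀ (n : ℕ) (p : ℚ[X]), p.natDegree < n →
    ∑ k ∈ range (n + 1), (-1 : ℚ) ^ k * (n.choose k) * p.eval (k : ℚ) = 0 := by
  intro n
  induction n with
  | zero => intro p hp; omega
  | succ n ih =>
    intro p hp
    by_cases hc : p.natDegree = 0
    · obtain ⟨c, rfl⟩ : ∃ c, p = C c := ⟨p.coeff 0, eq_C_of_natDegree_eq_zero hc⟩
      have h0 : ∑ k ∈ range (n + 2), (-1 : ℚ) ^ k * ((n+1).choose k) = 0 := by
        have := Int.alternating_sum_range_choose (n := n + 1)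
        simp only [Nat.succ_ne_zero, if_false] at this
        have := congrArg (fun z : ℤ => (z : ℚ)) this
        push_cast at this
        simpa using this
      calc ∑ k ∈ range (n + 2), (-1 : ℚ) ^ k * ((n+1).choose k) * (C c).eval (k : ℚ)
          = (∑ k ∈ range (n + 2), (-1 : ℚ) ^ k * ((n+1).choose k)) * c := by
            rw [Finset.sum_mul]; simp
        _ = 0 := by rw [h0, zero_mul]
    · have key : ∑ k ∈ range (n + 2), (-1 : ℚ) ^ k * ((n+1).choose k) * p.eval (k : ℚ)
          = (∑ k ∈ range (n + 1), (-1 : ℚ) ^ k * (n.choose k) * p.eval (k : ℚ))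
            - ∑ k ∈ range (n + 1), (-1 : ℚ) ^ k * (n.choose k) * p.eval ((k : ℚ) + 1) := by
        rw [Finset.sum_range_succ'
          (fun k => (-1 : ℚ) ^ k * ((n+1).choose k) * p.eval (k : ℚ)) (n+1)]
        have hsplit : ∀ k ∈ range (n + 1),
            (-1 : ℚ) ^ (k+1) * (((n+1).choose (k+1) : ℕ) : ℚ) * p.eval ((k+1 : ℕ) : ℚ)
            = -((-1 : ℚ) ^ k * (n.choose k) * p.eval ((k : ℚ) + 1))
              + ((-1:ℚ)^(k+1) * (n.choose (k+1)) * p.eval (((k+1 : ℕ) : ℚ))) := by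
          intro k _
          rw [Nat.choose_succ_succ]
          push_cast
          ring
        rw [Finset.sum_congr rfl hsplit, Finset.sum_add_distrib]
        have h2 : (∑ k ∈ range (n + 1),
              ((-1:ℚ)^(k+1) * (n.choose (k+1)) * p.eval (((k+1:ℕ) : ℚ))))
            + (-1:ℚ)^0 * (((n+1).choose 0 : ℕ) : ℚ) * p.eval ((0:ℕ) : ℚ)
            = ∑ k ∈ range (n + 2), (-1 : ℚ) ^ k * (n.choose k) * p.eval (k : ℚ) := by
          rw [Finset.sum_range_succ' (fun k => (-1 : ℚ) ^ k * (n.choose k) * p.eval (k : ℚ))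
            (n+1)]
          simp
        rw [Finset.sum_range_succ (fun k => (-1 : ℚ) ^ k * (n.choose k) * p.eval (k : ℚ))
          (n+1)] at h2
        simp only [Nat.choose_succ_self, Nat.cast_zero, mul_zero, zero_mul, add_zero] at h2
        have hneg : ∑ x ∈ range (n + 1), -((-1:ℚ) ^ x * (n.choose x) * p.eval ((x:ℚ) + 1))
            = -∑ x ∈ range (n + 1), ((-1:ℚ) ^ x * (n.choose x) * p.eval ((x:ℚ) + 1)) := by
          rw [Finset.sum_neg_distrib]
        push_cast at h2 hneg ⊢
        linarith [h2, hneg]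
      rw [key]
      set q : ℚ[X] := p.comp (X + C 1) - p with hq
      have hq_eval : ∀ k : ℕ, p.eval ((k : ℚ) + 1) = q.eval (k : ℚ) + p.eval (k : ℚ) := by
        intro k; simp [hq, eval_comp]
      have hsum : ∑ k ∈ range (n + 1), (-1 : ℚ) ^ k * (n.choose k) * p.eval ((k : ℚ) + 1)
          = (∑ k ∈ range (n + 1), (-1 : ℚ) ^ k * (n.choose k) * q.eval (k : ℚ))
            + ∑ k ∈ range (n + 1), (-1 : ℚ) ^ k * (n.choose k) * p.eval (k : ℚ) := by
        rw [← Finset.sum_add_distrib]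
        refine Finset.sum_congr rfl fun k _ => ?_
        rw [hq_eval k]
        ring
      have hqdeg : q.natDegree < n := by
        have h3 := shift_sub_natDegree_lt p (by omega)
        rw [← hq] at h3
        omega
      rw [hsum, ih q hqdeg]
      ring



def A : ℕ → ℚ → ℚ
  | 0, _ => 1
  | (k+1), x => x * (x + (k+1)) ^ k

@[simp] lemma A_zero (x : ℚ) : A 0 x = 1 := rfl
lemma A_succ (k : ℕ) (x : ℚ) : A (k+1) x = x * (x + (k+1)) ^ k := rfl

lemma A_mul_pow (n : ℕ) (x : ℚ) (k : ℕ) (hk : k ≤ n + 1) :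
    A k x * (x + k) ^ (n + 1 - k) = x * (x + k) ^ n := by
  match k with
  | 0 => simp [pow_succ, mul_comm]
  | (k+1) =>
    rw [A_succ]
    have hb : x + ((k:ℚ)+1) = x + ((k+1 : ℕ) : ℚ) := by push_cast; ring
    rw [hb, mul_assoc, ← pow_add]
    congr 2
    omega

lemma choose_mul_sub (n k : ℕ) :
    ((n+1).choose k : ℚ) * ((n + 1 - k : ℕ) : ℚ) = ((n:ℚ)+1) * (n.choose k : ℚ) := by
  have h : (n+1).choose k * (n + 1 - k) = (n+1) * n.choose k := by
    have e1 := Nat.choose_succ_right_eq (n+1) k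
    have e2 := Nat.add_one_mul_choose_eq n k
    omega
  have := congrArg (fun m : ℕ => (m : ℚ)) h
  push_cast at this
  linarith

lemma abel (n : ℕ) (x y : ℚ) :
    ∑ k ∈ range (n + 1), (n.choose k : ℚ) * A k x * (y + ((n - k : ℕ) : ℚ)) ^ (n - k)
      = (x + y + n) ^ n := by
  induction n generalizing y with
  | zero => simp
  | succ n ih =>
    set P : ℚ[X] := ∑ k ∈ range (n + 2),
      C (((n+1).choose k : ℚ) * A k x) * (X + C (((n + 1 - k : ℕ) : ℚ))) ^ (n + 1 - k) with hP
    set Q : ℚ[X] := (X + C (x + ((n:ℚ) + 1))) ^ (n + 1) with hQ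
    have hPeval : ∀ z : ℚ, P.eval z
        = ∑ k ∈ range (n + 2),
            ((n+1).choose k : ℚ) * A k x * (z + ((n + 1 - k : ℕ) : ℚ)) ^ (n + 1 - k) := by
      intro z
      rw [hP, eval_finset_sum]
      simp
    have hQeval : ∀ z : ℚ, Q.eval z = (x + z + ((n:ℚ)+1)) ^ (n + 1) := by
      intro z; rw [hQ]; simp; ring_nf
    have hD : derivative P = derivative Q := by
      apply Polynomial.funext
      intro z
      have hDP : derivative P = ∑ k ∈ range (n + 2),
          C (((n+1).choose k : ℚ) * A k x) *
            (C (((n + 1 - k : ℕ) : ℚ)) * (X + C (((n + 1 - k : ℕ) : ℚ))) ^ (n + 1 - k - 1)) := by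
        rw [hP, derivative_sum]
        refine Finset.sum_congr rfl fun k _ => ?_
        simp only [derivative_mul, derivative_C, zero_mul, zero_add, derivative_X_add_C_pow]
      rw [hDP, hQ, derivative_X_add_C_pow, eval_finset_sum]
      have hterm : ∀ k ∈ range (n + 2),
          eval z (C (((n+1).choose k : ℚ) * A k x) *
            (C (((n + 1 - k : ℕ) : ℚ)) * (X + C (((n + 1 - k : ℕ) : ℚ))) ^ (n + 1 - k - 1)))
          = ((n:ℚ)+1) * ((n.choose k : ℚ) * A k x * ((z+1) + ((n - k : ℕ) : ℚ)) ^ (n - k)) := by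
        intro k hk
        simp only [mem_range] at hk
        by_cases hkn : k ≤ n
        · simp only [eval_mul, eval_C, eval_pow, eval_add, eval_X]
          have h2 : n + 1 - k - 1 = n - k := by omega
          have h4 : z + ((n + 1 - k : ℕ) : ℚ) = (z + 1) + ((n - k : ℕ) : ℚ) := by
            have h1 : n + 1 - k = (n - k) + 1 := by omega
            have : ((n + 1 - k : ℕ) : ℚ) = ((n - k : ℕ) : ℚ) + 1 := by
              rw [h1]; push_cast; ring
            rw [this]; ring
          rw [h2, h4]
          calc ((n+1).choose k : ℚ) * A k x *
                (((n + 1 - k : ℕ) : ℚ) * ((z+1) + ((n - k : ℕ) : ℚ)) ^ (n - k))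
              = (((n+1).choose k : ℚ) * ((n + 1 - k : ℕ) : ℚ)) * A k x *
                ((z+1) + ((n - k : ℕ) : ℚ)) ^ (n - k) := by ring
            _ = _ := by rw [choose_mul_sub]; ring
        · have hk1 : k = n + 1 := by omega
          subst hk1
          simp [Nat.choose_self]
      rw [Finset.sum_congr rfl hterm, ← Finset.mul_sum]
      have hdrop : ∑ k ∈ range (n + 2),
          ((n.choose k : ℚ) * A k x * ((z+1) + ((n - k : ℕ) : ℚ)) ^ (n - k))
          = ∑ k ∈ range (n + 1),
          ((n.choose k : ℚ) * A k x * ((z+1) + ((n - k : ℕ) : ℚ)) ^ (n - k)) := by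
        rw [Finset.sum_range_succ]
        simp [Nat.choose_succ_self]
      rw [hdrop, ih (z+1)]
      simp only [eval_mul, eval_C, eval_pow, eval_add, eval_X, Nat.add_sub_cancel]
      push_cast
      ring
    have hval : P.eval (-(x + ((n:ℚ) + 1))) = 0 := by
      rw [hPeval]
      have hterm : ∀ k ∈ range (n + 2),
          ((n+1).choose k : ℚ) * A k x * ((-(x + ((n:ℚ) + 1))) + ((n + 1 - k : ℕ) : ℚ)) ^ (n + 1 - k)
          = ((-1:ℚ)^(n+1) * x) * ((-1:ℚ)^k * (((n+1).choose k : ℚ)) * ((X + C x).eval (k:ℚ)) ^ n) := by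
        intro k hk
        simp only [mem_range] at hk
        have hbase : (-(x + ((n:ℚ) + 1))) + ((n + 1 - k : ℕ) : ℚ) = -(x + k) := by
          have : ((n + 1 - k : ℕ) : ℚ) = ((n:ℚ) + 1) - k := by
            push_cast [Nat.cast_sub (by omega : k ≤ n + 1)]; ring
          rw [this]; ring
        rw [hbase, neg_pow]
        have hA := A_mul_pow n x k (by omega)
        have hsign : (-1:ℚ)^(n+1-k) = (-1:ℚ)^(n+1) * (-1:ℚ)^k := by
          have : (-1:ℚ)^(n+1-k) * (-1:ℚ)^k = (-1:ℚ)^(n+1) := by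
            rw [← pow_add]; congr 1; omega
          have hk2 : (-1:ℚ)^k * (-1:ℚ)^k = 1 := by
            rw [← mul_pow]; norm_num
          rw [← this, mul_assoc, hk2, mul_one]
        simp only [eval_add, eval_X, eval_C]
        calc ((n+1).choose k : ℚ) * A k x * ((-1:ℚ)^(n+1-k) * (x + (k:ℚ)) ^ (n + 1 - k))
            = (-1:ℚ)^(n+1-k) * ((n+1).choose k : ℚ) * (A k x * (x + (k:ℚ)) ^ (n + 1 - k)) := by ring
          _ = (-1:ℚ)^(n+1-k) * ((n+1).choose k : ℚ) * (x * (x + (k:ℚ)) ^ n) := by rw [hA]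
          _ = _ := by rw [hsign]; ring
      rw [Finset.sum_congr rfl hterm, ← Finset.mul_sum]
      have hfd := findiff (n+1) ((X + C x) ^ n) (by
        rw [natDegree_pow, natDegree_X_add_C, mul_one]; omega)
      have : ∑ k ∈ range (n + 2), (-1:ℚ)^k * (((n+1).choose k : ℚ)) * ((X + C x).eval (k:ℚ)) ^ n
          = ∑ k ∈ range (n + 2), (-1:ℚ)^k * (((n+1).choose k : ℚ)) * (((X + C x)^n).eval (k:ℚ)) := by
        refine Finset.sum_congr rfl fun k _ => ?_
        rw [eval_pow]
      rw [this, hfd, mul_zero]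
    have hPQ : P = Q := by
      have hder : derivative (P - Q) = 0 := by rw [derivative_sub, hD, sub_self]
      have hconst := eq_C_of_derivative_eq_zero hder
      have hQval : Q.eval (-(x + ((n:ℚ) + 1))) = 0 := by
        rw [hQeval]; ring_nf
      have hval0 : (P - Q).eval (-(x + ((n:ℚ) + 1))) = 0 := by
        rw [eval_sub, hval, hQval, sub_zero]
      rw [hconst] at hval0
      rw [eval_C] at hval0
      have : P - Q = 0 := by rw [hconst, hval0, map_zero]
      exact sub_eq_zero.mp this
    have := congrArg (eval y) hPQ
    rw [hPeval, hQeval] at this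
    convert this using 2 <;> push_cast <;> ring

lemma A_eq (m : ℕ) (y : ℚ) :
    A m y = (y + m) ^ m - m * (y + m) ^ (m - 1) := by
  match m with
  | 0 => simp
  | (k+1) =>
    rw [A_succ]
    have : (y + ((k+1:ℕ) : ℚ)) ^ (k+1) = (y + ((k+1:ℕ):ℚ)) * (y + ((k+1:ℕ):ℚ)) ^ k := by
      rw [pow_succ]; ring
    simp only [Nat.add_sub_cancel]
    push_cast [this]
    ring

lemma abel2 (m : ℕ) (x y : ℚ) :
    ∑ k ∈ range (m + 2), ((m+1).choose k : ℚ) * A k x * A (m + 1 - k) y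
      = (x + y) * (x + y + ((m:ℚ)+1)) ^ m := by
  have hsplit : ∀ k ∈ range (m + 2),
      ((m+1).choose k : ℚ) * A k x * A (m + 1 - k) y
      = ((m+1).choose k : ℚ) * A k x * (y + ((m + 1 - k : ℕ):ℚ)) ^ (m + 1 - k)
        - ((m+1).choose k : ℚ) * ((m + 1 - k : ℕ):ℚ) * A k x * (y + ((m + 1 - k : ℕ):ℚ)) ^ (m + 1 - k - 1) := by
    intro k _
    rw [A_eq (m + 1 - k) y]
    ring
  rw [Finset.sum_congr rfl hsplit, Finset.sum_sub_distrib]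
  have h1 := abel (m+1) x y
  have h2 : ∑ k ∈ range (m + 2),
      ((m+1).choose k : ℚ) * ((m + 1 - k : ℕ):ℚ) * A k x * (y + ((m + 1 - k : ℕ):ℚ)) ^ (m + 1 - k - 1)
      = ((m:ℚ)+1) * (x + y + ((m:ℚ)+1)) ^ m := by
    rw [Finset.sum_range_succ]
    simp only [Nat.sub_self, Nat.cast_zero, mul_zero, zero_mul, mul_assoc]
    have hterm : ∀ k ∈ range (m + 1),
        ((m+1).choose k : ℚ) * (((m + 1 - k : ℕ):ℚ) * (A k x * (y + ((m + 1 - k : ℕ):ℚ)) ^ (m + 1 - k - 1)))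
        = ((m:ℚ)+1) * ((m.choose k : ℚ) * A k x * ((y+1) + ((m - k : ℕ):ℚ)) ^ (m - k)) := by
      intro k hk
      simp only [mem_range] at hk
      have h2' : m + 1 - k - 1 = m - k := by omega
      have h4 : (y : ℚ) + ((m + 1 - k : ℕ) : ℚ) = (y + 1) + ((m - k : ℕ) : ℚ) := by
        have : ((m + 1 - k : ℕ) : ℚ) = ((m - k : ℕ) : ℚ) + 1 := by
          have h1' : m + 1 - k = (m - k) + 1 := by omega
          rw [h1']; push_cast; ring
        rw [this]; ring
      rw [h2', h4]
      have := choose_mul_sub m k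
      calc ((m+1).choose k : ℚ) * (((m + 1 - k : ℕ):ℚ) * (A k x * ((y+1) + ((m - k : ℕ):ℚ)) ^ (m - k)))
          = (((m+1).choose k : ℚ) * ((m + 1 - k : ℕ):ℚ)) * (A k x * ((y+1) + ((m - k : ℕ):ℚ)) ^ (m - k)) := by ring
        _ = _ := by rw [this]; ring
    rw [Finset.sum_congr rfl hterm, ← Finset.mul_sum, abel m x (y+1)]
    ring_nf
  rw [h1, h2]
  have hpow : (x + y + ((m:ℚ)+1)) ^ (m+1) = (x + y + ((m:ℚ)+1)) * (x + y + ((m:ℚ)+1)) ^ m := by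
    rw [pow_succ]; ring
  push_cast at h1 ⊢
  rw [hpow]  -- may need adjusting
  ring

noncomputable def Ap : ℕ → ℚ[X]
  | 0 => 1
  | (k+1) => X * (X + C ((k:ℚ)+1)) ^ k

lemma Ap_eval (k : ℕ) (x : ℚ) : (Ap k).eval x = A k x := by
  match k with
  | 0 => simp [Ap]
  | (k+1) => simp [Ap, A_succ]

lemma Ap_coeff_one (k : ℕ) : (Ap k).coeff 1 = if k = 0 then 0 else ((k:ℕ):ℚ)^(k-1) := by
  match k with
  | 0 => simp [Ap, coeff_one]
  | (k+1) =>
    simp only [Ap, Nat.succ_ne_zero, if_false]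
    rw [show (1:ℕ) = 0 + 1 from rfl, coeff_X_mul, coeff_X_add_C_pow]
    push_cast
    simp

lemma abel3 (m : ℕ) (y : ℚ) :
    ∑ j ∈ range (m + 1), ((m+1).choose (j+1) : ℚ) * ((j:ℚ)+1)^j * A (m - j) y
      = (y + ((m:ℚ)+1))^m + (m:ℚ) * y * (y + ((m:ℚ)+1))^(m-1) := by
  set P : ℚ[X] := ∑ k ∈ range (m + 2),
    C (((m+1).choose k : ℚ) * A (m + 1 - k) y) * Ap k with hP
  set Q : ℚ[X] := (X + C y) * (X + C (y + ((m:ℚ)+1)))^m with hQ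
  have hPQ : P = Q := by
    apply Polynomial.funext
    intro z
    rw [hP, hQ, eval_finset_sum]
    have : ∀ k ∈ range (m+2),
        eval z (C (((m+1).choose k : ℚ) * A (m + 1 - k) y) * Ap k)
        = ((m+1).choose k : ℚ) * A k z * A (m + 1 - k) y := by
      intro k _
      rw [eval_mul, eval_C, Ap_eval]
      ring
    rw [Finset.sum_congr rfl this, abel2 m z y]
    simp only [eval_mul, eval_add, eval_X, eval_C, eval_pow]
    ring
  have hco := congrArg (fun p : ℚ[X] => p.coeff 1) hPQ
  simp only [hP, hQ] at hco
  rw [finset_sum_coeff] at hco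
  rw [Finset.sum_range_succ'
    (fun k => (C (((m+1).choose k : ℚ) * A (m + 1 - k) y) * Ap k).coeff 1) (m+1)] at hco
  have h0 : (C (((m+1).choose 0 : ℚ) * A (m + 1 - 0) y) * Ap 0).coeff 1 = 0 := by
    simp [Ap, coeff_C]
  have hterm : ∀ j ∈ range (m+1),
      (C (((m+1).choose (j+1) : ℚ) * A (m + 1 - (j+1)) y) * Ap (j+1)).coeff 1
      = ((m+1).choose (j+1) : ℚ) * ((j:ℚ)+1)^j * A (m - j) y := by
    intro j _
    rw [coeff_C_mul, Ap_coeff_one]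
    simp only [Nat.succ_ne_zero, if_false, Nat.succ_sub_succ, Nat.add_sub_cancel]
    push_cast
    simp only [Nat.sub_zero]
    ring
  rw [h0, add_zero, Finset.sum_congr rfl hterm] at hco
  rw [hco]
  -- now compute coeff 1 of Q
  rw [add_mul, coeff_add, coeff_C_mul]
  rw [show (1:ℕ) = 0 + 1 from rfl, coeff_X_mul, coeff_X_add_C_pow, coeff_X_add_C_pow]
  rw [Nat.choose_one_right]
  simp only [Nat.choose_zero_right, Nat.sub_zero, Nat.cast_one]
  push_cast
  ring

lemma abelU (m : ℕ) :
    ∑ j ∈ range m, ((m+1).choose (j+1) : ℚ) * ((j:ℚ)+1)^j * ((m-j:ℕ):ℚ)^(m-j-1)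
      = 2 * (m:ℚ) * ((m:ℚ)+1)^(m-1) := by
  set P : ℚ[X] := ∑ j ∈ range (m + 1),
    C (((m+1).choose (j+1) : ℚ) * ((j:ℚ)+1)^j) * Ap (m - j) with hP
  set Q : ℚ[X] := (X + C ((m:ℚ)+1))^m + C (m:ℚ) * (X * (X + C ((m:ℚ)+1))^(m-1)) with hQ
  have hPQ : P = Q := by
    apply Polynomial.funext
    intro z
    rw [hP, hQ, eval_finset_sum]
    have : ∀ j ∈ range (m+1),
        eval z (C (((m+1).choose (j+1) : ℚ) * ((j:ℚ)+1)^j) * Ap (m - j))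
        = ((m+1).choose (j+1) : ℚ) * ((j:ℚ)+1)^j * A (m - j) z := by
      intro j _
      rw [eval_mul, eval_C, Ap_eval]
    rw [Finset.sum_congr rfl this, abel3 m z]
    simp only [eval_mul, eval_add, eval_X, eval_C, eval_pow]
    ring
  have hco := congrArg (fun p : ℚ[X] => p.coeff 1) hPQ
  simp only [hP, hQ] at hco
  rw [finset_sum_coeff, Finset.sum_range_succ] at hco
  have h0 : (C (((m+1).choose (m+1) : ℚ) * ((m:ℚ)+1)^m) * Ap (m - m)).coeff 1 = 0 := by
    rw [Nat.sub_self, show Ap 0 = (1:ℚ[X]) from rfl, mul_one, coeff_C]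
    norm_num
  have hterm : ∀ j ∈ range m,
      (C (((m+1).choose (j+1) : ℚ) * ((j:ℚ)+1)^j) * Ap (m - j)).coeff 1
      = ((m+1).choose (j+1) : ℚ) * ((j:ℚ)+1)^j * ((m-j:ℕ):ℚ)^(m-j-1) := by
    intro j hj
    simp only [mem_range] at hj
    rw [coeff_C_mul, Ap_coeff_one]
    rw [if_neg (by omega)]
  rw [h0, add_zero, Finset.sum_congr rfl hterm] at hco
  rw [hco]
  rw [coeff_add, coeff_C_mul]
  rw [show (1:ℕ) = 0 + 1 from rfl, coeff_X_mul, coeff_X_add_C_pow, coeff_X_add_C_pow]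
  push_cast [Nat.choose_one_right, Nat.choose_zero_right, Nat.sub_zero]
  ring

lemma abelV (m : ℕ) :
    ∑ j ∈ range m, ((m+1).choose (j+1) : ℚ) * ((j:ℚ)+1)^(j+1) * ((m-j:ℕ):ℚ)^(m-j-1)
      = (m:ℚ) * ((m:ℚ)+1)^m := by
  rcases Nat.eq_zero_or_pos m with hm | hm
  · subst hm; simp
  set f : ℕ → ℚ := fun j => ((m+1).choose (j+1) : ℚ) * ((j:ℚ)+1)^j * ((m-j:ℕ):ℚ)^(m-j-1)
    with hf
  have hsym : ∀ j < m, f (m - 1 - j) = f j := by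
    intro j hj
    simp only [hf]
    have e1 : m - 1 - j + 1 = m - j := by omega
    have e2 : m - (m - 1 - j) = j + 1 := by omega
    have e3 : m - (m - 1 - j) - 1 = j := by omega
    have e4 : ((m - 1 - j : ℕ) : ℚ) + 1 = ((m - j : ℕ) : ℚ) := by
      rw [← e1]; push_cast; ring
    have e5 : (m+1).choose (m - 1 - j + 1) = (m+1).choose (j+1) := by
      rw [e1, show m - j = (m+1) - (j+1) by omega]
      exact Nat.choose_symm (by omega)
    rw [e2, Nat.add_sub_cancel, e4, e5, show m - j - 1 = m - 1 - j by omega]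
    push_cast
    ring
  have hV : ∑ j ∈ range m, ((m+1).choose (j+1) : ℚ) * ((j:ℚ)+1)^(j+1) * ((m-j:ℕ):ℚ)^(m-j-1)
      = ∑ j ∈ range m, ((j:ℚ)+1) * f j := by
    refine Finset.sum_congr rfl fun j _ => ?_
    simp only [hf]
    rw [pow_succ]
    ring
  have hrefl := Finset.sum_range_reflect (fun j => ((j:ℚ)+1) * f j) m
  have hrefl2 : ∑ j ∈ range m, (((m - 1 - j : ℕ):ℚ)+1) * f (m - 1 - j)
      = ∑ j ∈ range m, ((m - j : ℕ):ℚ) * f j := by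
    refine Finset.sum_congr rfl fun j hj => ?_
    simp only [mem_range] at hj
    have e4 : ((m - 1 - j : ℕ) : ℚ) + 1 = ((m - j : ℕ) : ℚ) := by
      rw [show m - j = m - 1 - j + 1 by omega]
      push_cast
      ring
    rw [e4, hsym j hj]
  have hsum2 : ∑ j ∈ range m, ((j:ℚ)+1) * f j + ∑ j ∈ range m, ((m - j : ℕ):ℚ) * f j
      = ((m:ℚ)+1) * ∑ j ∈ range m, f j := by
    rw [← Finset.sum_add_distrib, Finset.mul_sum]
    refine Finset.sum_congr rfl fun j hj => ?_
    simp only [mem_range] at hj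
    have : ((m - j : ℕ) : ℚ) = (m:ℚ) - (j:ℚ) := by
      push_cast [Nat.cast_sub (le_of_lt hj)]; ring
    rw [this]
    ring
  have hU := abelU m
  rw [← hf] at hU  -- f sums
  have hVval : 2 * ∑ j ∈ range m, ((j:ℚ)+1) * f j
      = ((m:ℚ)+1) * (2 * (m:ℚ) * ((m:ℚ)+1)^(m-1)) := by
    have := hrefl.symm.trans hrefl2
    calc 2 * ∑ j ∈ range m, ((j:ℚ)+1) * f j
        = ∑ j ∈ range m, ((j:ℚ)+1) * f j + ∑ j ∈ range m, ((m - j : ℕ):ℚ) * f j := by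
          rw [← this]; ring
      _ = ((m:ℚ)+1) * ∑ j ∈ range m, f j := hsum2
      _ = _ := by rw [hU]
  have hpow : ((m:ℚ)+1) * ((m:ℚ)+1)^(m-1) = ((m:ℚ)+1)^m := by
    rw [← pow_succ']
    congr 1
    omega
  rw [hV]
  nlinarith [hVval, hpow]


end AbelPart

section PSPart
open Finset PowerSeries
/-- `Y(q) = Σ_{n≥1} n^{n-1} q^n / n!`. -/
noncomputable def Y : PowerSeries ℚ :=
  PowerSeries.mk fun n => if n = 0 then 0 else (n : ℚ) ^ (n - 1) / n.factorial

/-- The formal exponential of a power series (with zero constant term), defined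
coefficientwise: the coefficient of `q^n` in `e^f` is `Σ_{k=0}^{n} [q^n] f^k / k!`. -/
noncomputable def expS (f : PowerSeries ℚ) : PowerSeries ℚ :=
  PowerSeries.mk fun n =>
    ∑ k ∈ Finset.range (n + 1), PowerSeries.coeff n (f ^ k) / k.factorial

lemma coeff_Y (n : ℕ) :
    coeff n Y = if n = 0 then 0 else (n : ℚ) ^ (n - 1) / n.factorial := by
  simp [Y, coeff_mk]

lemma constantCoeff_Y : constantCoeff Y = 0 := by
  rw [← coeff_zero_eq_constantCoeff, coeff_Y]; simp

lemma coeff_Y_pow_zero {k n : ℕ} (h : n < k) : coeff n (Y ^ k) = 0 := by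
  have hdvd : (X : PowerSeries ℚ) ^ k ∣ Y ^ k :=
    pow_dvd_pow_of_dvd (X_dvd_iff.mpr constantCoeff_Y) k
  exact X_pow_dvd_iff.mp hdvd n h

lemma coeff_rec (m : ℕ) :
    ∑ j ∈ range m, ((j:ℚ)+1) * coeff (j+1) Y * coeff (m-j) Y
      = (m:ℚ) * coeff (m+1) Y := by
  have hterm : ∀ j ∈ range m,
      ((j:ℚ)+1) * coeff (j+1) Y * coeff (m-j) Y
      = (1 / ((m+1).factorial : ℚ)) *
        (((m+1).choose (j+1) : ℚ) * ((j:ℚ)+1)^(j+1) * ((m-j:ℕ):ℚ)^(m-j-1)) := by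
    intro j hj
    simp only [mem_range] at hj
    rw [coeff_Y, coeff_Y, if_neg (Nat.succ_ne_zero j), if_neg (by omega : ¬ m - j = 0)]
    have hfact : (((m+1).choose (j+1) : ℕ) : ℚ) * ((j+1).factorial : ℚ) * ((m-j).factorial : ℚ)
        = ((m+1).factorial : ℚ) := by
      have h := Nat.choose_mul_factorial_mul_factorial (show j+1 ≤ m+1 by omega)
      rw [show m + 1 - (j+1) = m - j by omega] at h
      exact_mod_cast congrArg (fun t : ℕ => (t : ℚ)) h
    have hf1 : ((j+1).factorial : ℚ) ≠ 0 := Nat.cast_ne_zero.mpr (Nat.factorial_ne_zero _)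
    have hf2 : ((m-j).factorial : ℚ) ≠ 0 := Nat.cast_ne_zero.mpr (Nat.factorial_ne_zero _)
    have hf3 : ((m+1).factorial : ℚ) ≠ 0 := Nat.cast_ne_zero.mpr (Nat.factorial_ne_zero _)
    have hc1 : ((j+1:ℕ) : ℚ) = (j:ℚ)+1 := by push_cast; ring
    have he : (j+1) - 1 = j := by omega
    rw [he, hc1]
    field_simp
    rw [← hfact]
    ring_nf
  rw [Finset.sum_congr rfl hterm, ← Finset.mul_sum, abelV m]
  rw [coeff_Y, if_neg (Nat.succ_ne_zero m)]
  have hf3 : ((m+1).factorial : ℚ) ≠ 0 := Nat.cast_ne_zero.mpr (Nat.factorial_ne_zero _)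
  have hc : ((m+1:ℕ) : ℚ) = (m:ℚ)+1 := by push_cast; ring
  rw [Nat.add_sub_cancel, hc]
  field_simp

lemma coeff_X_mul_eq (f : PowerSeries ℚ) (i : ℕ) :
    coeff i (X * f) = if i = 0 then 0 else coeff (i-1) f := by
  cases i with
  | zero => simp [coeff_zero_eq_constantCoeff, map_mul]
  | succ j => rw [coeff_succ_X_mul]; simp

lemma coeff_L (i : ℕ) :
    coeff i ((X : PowerSeries ℚ) * PowerSeries.derivative ℚ Y) = (i:ℚ) * coeff i Y := by
  rw [coeff_X_mul_eq]
  cases i with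
  | zero => simp [coeff_Y]
  | succ j =>
    rw [if_neg (Nat.succ_ne_zero j), coeff_derivative]
    rw [Nat.succ_sub_one]
    push_cast
    ring

lemma R2 : (X : PowerSeries ℚ) * (PowerSeries.derivative ℚ Y)
    = Y + X * (PowerSeries.derivative ℚ Y) * Y := by
  ext n
  rw [map_add]
  conv_rhs => rw [coeff_mul, Finset.Nat.sum_antidiagonal_eq_sum_range_succ_mk]
  rw [coeff_L n]
  cases n with
  | zero => simp [coeff_L, coeff_Y]
  | succ m =>
    have hsum : ∑ k ∈ range (m + 2),
        coeff k ((X : PowerSeries ℚ) * PowerSeries.derivative ℚ Y) * coeff (m + 1 - k) Y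
        = (m:ℚ) * coeff (m+1) Y := by
      rw [Finset.sum_range_succ']
      have h0 : coeff 0 ((X : PowerSeries ℚ) * PowerSeries.derivative ℚ Y)
          * coeff (m + 1 - 0) Y = 0 := by
        rw [coeff_L]; simp
      rw [h0, add_zero]
      rw [Finset.sum_range_succ]
      have htop : coeff (m+1) ((X : PowerSeries ℚ) * PowerSeries.derivative ℚ Y)
          * coeff (m + 1 - (m+1)) Y = 0 := by
        rw [Nat.sub_self, coeff_zero_eq_constantCoeff, constantCoeff_Y, mul_zero]
      rw [htop, add_zero]
      rw [← coeff_rec m]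
      refine Finset.sum_congr rfl fun j hj => ?_
      rw [coeff_L]
      rw [show m + 1 - (j+1) = m - j by omega]
      push_cast
      ring
    rw [hsum]
    push_cast
    ring

lemma coeff_expS (f : PowerSeries ℚ) (n : ℕ) :
    coeff n (expS f) = ∑ k ∈ range (n + 1), coeff n (f ^ k) / k.factorial := by
  simp [expS, coeff_mk]

lemma R1 : PowerSeries.derivative ℚ (expS Y)
    = (PowerSeries.derivative ℚ Y) * expS Y := by
  ext n
  rw [coeff_derivative, coeff_expS]
  have hlhs : (∑ k ∈ range (n + 1 + 1), coeff (n+1) (Y ^ k) / k.factorial) * ((n:ℚ)+1)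
      = ∑ k ∈ range (n + 1), coeff n (Y ^ k * PowerSeries.derivative ℚ Y) / k.factorial := by
    rw [Finset.sum_mul]
    have hterm : ∀ k ∈ range (n+2),
        coeff (n+1) (Y ^ k) / k.factorial * ((n:ℚ)+1)
        = (k:ℚ) * coeff n (Y ^ (k-1) * PowerSeries.derivative ℚ Y) / k.factorial := by
      intro k _
      have hd : coeff (n+1) (Y ^ k) * ((n:ℚ)+1)
          = (k:ℚ) * coeff n (Y ^ (k-1) * PowerSeries.derivative ℚ Y) := by
        have h1 : coeff n (PowerSeries.derivative ℚ (Y ^ k))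
            = coeff (n+1) (Y ^ k) * ((n:ℚ)+1) := by
          rw [coeff_derivative]
        rw [← h1, Derivation.leibniz_pow]
        rw [smul_eq_mul, map_nsmul, nsmul_eq_mul]
      rw [div_mul_eq_mul_div, hd]
    rw [Finset.sum_congr rfl hterm]
    rw [Finset.sum_range_succ' (fun k => (k:ℚ) * coeff n (Y ^ (k-1) * PowerSeries.derivative ℚ Y) / k.factorial) (n+1)]
    simp only [Nat.cast_zero, zero_mul, zero_div, add_zero, Nat.succ_sub_one]
    refine Finset.sum_congr rfl fun k _ => ?_
    rw [Nat.factorial_succ]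
    push_cast
    have hf1 : ((k).factorial : ℚ) ≠ 0 := Nat.cast_ne_zero.mpr (Nat.factorial_ne_zero _)
    field_simp
  rw [hlhs]
  rw [coeff_mul, Finset.Nat.sum_antidiagonal_eq_sum_range_succ_mk]
  have hrhs : ∀ i ∈ range (n+1),
      coeff i (PowerSeries.derivative ℚ Y) * coeff (n - i) (expS Y)
      = ∑ k ∈ range (n+1),
          coeff i (PowerSeries.derivative ℚ Y) * coeff (n-i) (Y ^ k) / k.factorial := by
    intro i hi
    simp only [mem_range] at hi
    rw [coeff_expS]
    have hext : ∑ k ∈ range (n - i + 1), coeff (n-i) (Y ^ k) / k.factorial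
        = ∑ k ∈ range (n + 1), coeff (n-i) (Y ^ k) / k.factorial := by
      apply Finset.sum_subset
      · apply Finset.range_subset_range.mpr; omega
      · intro k _ hk
        simp only [mem_range, not_lt] at hk
        rw [coeff_Y_pow_zero (by omega)]
        simp
    rw [hext, Finset.mul_sum]
    refine Finset.sum_congr rfl fun k _ => ?_
    ring
  rw [Finset.sum_congr rfl hrhs, Finset.sum_comm]
  refine Finset.sum_congr rfl fun k _ => ?_
  rw [← Finset.sum_div]
  rw [show (∑ i ∈ range (n+1), coeff i (PowerSeries.derivative ℚ Y) * coeff (n-i) (Y ^ k))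
      = coeff n (PowerSeries.derivative ℚ Y * Y ^ k) by
    rw [coeff_mul, Finset.Nat.sum_antidiagonal_eq_sum_range_succ_mk]]
  rw [mul_comm (Y ^ k) (PowerSeries.derivative ℚ Y)]

/-- The functional equation `Y = q · e^Y`. -/
theorem Y_eq_q_mul_exp_Y : Y = PowerSeries.X * expS Y := by
  have hDXE : PowerSeries.derivative ℚ (X * expS Y)
      = expS Y + X * (PowerSeries.derivative ℚ Y * expS Y) := by
    rw [Derivation.leibniz, PowerSeries.derivative_X, R1, smul_eq_mul, smul_eq_mul, mul_one]
    ring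
  have hqd : PowerSeries.derivative ℚ (Y - X * expS Y)
      = PowerSeries.derivative ℚ Y
        - (expS Y + X * (PowerSeries.derivative ℚ Y * expS Y)) := by
    rw [map_sub, hDXE]
  have H2 : X * (PowerSeries.derivative ℚ (Y - X * expS Y) * (1 - Y)) = Y - X * expS Y := by
    rw [hqd]
    linear_combination (1 - X * expS Y) * R2
  have hg : ∀ n, coeff n (Y - X * expS Y) = 0 := by
    intro n
    induction n using Nat.strong_induction_on with
    | _ n ih =>
      match n, ih with
      | 0, _ =>
        rw [map_sub, coeff_Y, coeff_X_mul_eq]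
        simp
      | 1, _ =>
        rw [map_sub, coeff_Y, coeff_X_mul_eq, if_neg one_ne_zero, if_neg one_ne_zero]
        rw [coeff_expS]
        simp [coeff_zero_eq_constantCoeff]
      | (m+2), ih =>
        have hkey := congrArg (coeff (m+2)) H2
        rw [show m + 2 = (m+1) + 1 from rfl, coeff_succ_X_mul] at hkey
        rw [coeff_mul, Finset.Nat.sum_antidiagonal_eq_sum_range_succ_mk] at hkey
        rw [Finset.sum_range_succ] at hkey
        have hzero : ∀ k ∈ range (m+1),
            coeff k (PowerSeries.derivative ℚ (Y - X * expS Y))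
              * coeff (m + 1 - k) (1 - Y) = 0 := by
          intro k hk
          simp only [mem_range] at hk
          rw [coeff_derivative, ih (k+1) (by omega), zero_mul, zero_mul]
        rw [Finset.sum_congr rfl hzero, Finset.sum_const_zero, zero_add] at hkey
        rw [Nat.sub_self, coeff_derivative] at hkey
        have hone : coeff 0 (1 - Y) = 1 := by
          rw [map_sub, coeff_zero_eq_constantCoeff, map_one, constantCoeff_Y, sub_zero]
        rw [hone, mul_one] at hkey
        -- hkey : coeff (m+2) G * (m+2) = coeff (m+2) G
        have : ((m:ℚ) + 1 + 1) ≠ 1 := by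
          have : (0:ℚ) ≤ (m:ℚ) := Nat.cast_nonneg m
          intro h; nlinarith
        push_cast at hkey
        nlinarith [hkey, Nat.cast_nonneg (α := ℚ) m]
  have : Y - X * expS Y = 0 := by
    ext n
    rw [hg n, map_zero]
  exact sub_eq_zero.mp this

end PSPart
end

section
/- Let Y = Σ_{n≥1} n^{n-1} q^n / n! and Z = Σ_{n≥1} n^n q^n / n!. Then (1 − Y)(1 + Z) = 1 as formal power series. -/
/-- `Z(q) = Σ_{n≥1} n^n q^n / n!`. -/
noncomputable def Z : PowerSeries ℚ :=
  PowerSeries.mk fun n => if n = 0 then 0 else (n : ℚ) ^ n / n.factorial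

open Finset Polynomial


lemma fd : ∀ n : ℕ, ∀ j : ℕ, j < n →
    ∑ k ∈ range (n+1), (-1:ℚ)^k * (n.choose k) * (k:ℚ)^j = 0 := by
  intro n
  induction n with
  | zero => omega
  | succ n ih =>
    intro j hj
    match j with
    | 0 =>
      have h := Int.alternating_sum_range_choose (n := n+1)
      rw [if_neg (Nat.succ_ne_zero n)] at h
      have h2 := congrArg (fun z : ℤ => (z : ℚ)) h
      push_cast at h2
      simpa using h2
    | i+1 =>
      have hi : i < n := by omega
      rw [Finset.sum_range_succ']
      have hterm : ∀ m : ℕ, (-1:ℚ)^(m+1) * ((n+1).choose (m+1)) * ((m:ℚ)+1)^(i+1)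
          = ∑ t ∈ range (i+1),
              (-((n:ℚ)+1)) * ((i.choose t : ℚ) * ((-1:ℚ)^m * (n.choose m) * (m:ℚ)^t)) := by
        intro m
        have hc : ((n+1) * n.choose m : ℕ) = ((n+1).choose (m+1) * (m+1) : ℕ) :=
          Nat.add_one_mul_choose_eq n m
        have hc' : ((n:ℚ)+1) * (n.choose m : ℚ) = ((n+1).choose (m+1) : ℚ) * ((m:ℚ)+1) := by
          exact_mod_cast congrArg (fun x : ℕ => (x:ℚ)) hc
        have hp : ((m:ℚ)+1)^i = ∑ t ∈ range (i+1), (m:ℚ)^t * (i.choose t : ℚ) := by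
          have := add_pow (m:ℚ) 1 i
          simpa using this
        calc (-1:ℚ)^(m+1) * ((n+1).choose (m+1)) * ((m:ℚ)+1)^(i+1)
            = (-(-1:ℚ)^m) * (((n+1).choose (m+1) : ℚ) * ((m:ℚ)+1)) * ((m:ℚ)+1)^i := by
              ring
          _ = (-(-1:ℚ)^m) * (((n:ℚ)+1) * (n.choose m : ℚ))
                * ∑ t ∈ range (i+1), (m:ℚ)^t * (i.choose t : ℚ) := by rw [hc', hp]
          _ = _ := by
              rw [Finset.mul_sum]
              exact Finset.sum_congr rfl (fun t _ => by ring)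
      push_cast
      rw [Finset.sum_congr rfl (fun m _ => hterm m), Finset.sum_comm]
      have hz : ∀ t ∈ range (i+1),
          ∑ m ∈ range (n+1), (-((n:ℚ)+1)) * ((i.choose t : ℚ)
            * ((-1:ℚ)^m * (n.choose m) * (m:ℚ)^t)) = 0 := by
        intro t ht
        rw [← Finset.mul_sum, ← Finset.mul_sum, ih t (by simp at ht; omega)]
        ring
      rw [Finset.sum_congr rfl hz]
      simp

-- eval lemma first: the alternating sum vanishing
lemma evalzero (n : ℕ) :
    ∑ m ∈ range (n+2), (((n+2).choose (m+1) * (m+1)^m : ℕ) : ℚ) * (-(((m:ℕ):ℚ)+1))^(n+1-m) = 0 := by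
  have h := fd (n+2) (n+1) (by omega)
  rw [Finset.sum_range_succ'] at h
  simp only [pow_zero, Nat.cast_zero, zero_pow (by omega : n+1 ≠ 0), mul_zero, add_zero] at h
  have hterm : ∀ m ∈ range (n+2),
      (((n+2).choose (m+1) * (m+1)^m : ℕ) : ℚ) * (-(((m:ℕ):ℚ)+1))^(n+1-m)
      = (-1:ℚ)^n * ((-1:ℚ)^(m+1) * ((n+2).choose (m+1) : ℚ) * (((m:ℕ):ℚ)+1)^(n+1)) := by
    intro m hm
    have hm' : m ≤ n+1 := by simp at hm; omega
    have hs : (-1:ℚ)^(n+1-m) * (-1:ℚ)^(m+1) = (-1:ℚ)^n := by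
      rw [← pow_add, show n+1-m+(m+1) = n+2 from by omega, pow_succ, pow_succ]; ring
    have h2 : (-1:ℚ)^(m+1) * (-1:ℚ)^(m+1) = 1 := by
      rw [← pow_add]; exact Even.neg_one_pow ⟨m+1, by ring⟩
    have hsgn : (-1:ℚ)^(n+1-m) = (-1:ℚ)^n * (-1:ℚ)^(m+1) := by
      calc (-1:ℚ)^(n+1-m) = (-1:ℚ)^(n+1-m) * ((-1:ℚ)^(m+1) * (-1:ℚ)^(m+1)) := by rw [h2]; ring
        _ = ((-1:ℚ)^(n+1-m) * (-1:ℚ)^(m+1)) * (-1:ℚ)^(m+1) := by ring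
        _ = (-1:ℚ)^n * (-1:ℚ)^(m+1) := by rw [hs]
    have hpow : (((m:ℕ):ℚ)+1)^m * (((m:ℕ):ℚ)+1)^(n+1-m) = (((m:ℕ):ℚ)+1)^(n+1) := by
      rw [← pow_add, show m + (n+1-m) = n+1 from by omega]
    calc (((n+2).choose (m+1) * (m+1)^m : ℕ) : ℚ) * (-(((m:ℕ):ℚ)+1))^(n+1-m)
        = ((n+2).choose (m+1) : ℚ) * (((m:ℕ):ℚ)+1)^m
            * ((-1:ℚ)^(n+1-m) * (((m:ℕ):ℚ)+1)^(n+1-m)) := by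
          push_cast
          rw [neg_pow]
      _ = (-1:ℚ)^n * ((-1:ℚ)^(m+1) * ((n+2).choose (m+1) : ℚ)
            * ((((m:ℕ):ℚ)+1)^m * (((m:ℕ):ℚ)+1)^(n+1-m))) := by rw [hsgn]; ring
      _ = _ := by rw [hpow]
  rw [Finset.sum_congr rfl hterm, ← Finset.mul_sum]
  have : ∑ m ∈ range (n+2), ((-1:ℚ)^(m+1) * ((n+2).choose (m+1) : ℚ) * (((m:ℕ):ℚ)+1)^(n+1)) = 0 := by
    rw [← h]; exact Finset.sum_congr rfl (fun m _ => by push_cast; ring)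
  rw [this, mul_zero]

lemma abel_s1 : ∀ (n : ℕ) (a : ℚ),
    ∑ m ∈ range (n+1), Polynomial.C (((n+1).choose (m+1) * (m+1)^m : ℕ) : ℚ)
      * (X + Polynomial.C (a + ((n-m : ℕ) : ℚ)))^(n-m)
    = Polynomial.C ((n:ℚ)+1) * (X + Polynomial.C (a + n + 1))^n := by
  intro n
  induction n with
  | zero => intro a; simp
  | succ n ih =>
    intro a
    set L : Polynomial ℚ := ∑ m ∈ range (n+2),
      Polynomial.C ((((n+2)).choose (m+1) * (m+1)^m : ℕ) : ℚ)
        * (X + Polynomial.C (a + ((n+1-m : ℕ) : ℚ)))^(n+1-m) with hLdef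
    set R : Polynomial ℚ := Polynomial.C (((n+1:ℕ):ℚ)+1)
      * (X + Polynomial.C (a + ((n+1:ℕ):ℚ) + 1))^(n+1) with hRdef
    show L = R
    -- derivatives agree
    have hderL : derivative L = Polynomial.C ((n:ℚ)+2) *
        (Polynomial.C ((n:ℚ)+1) * (X + Polynomial.C ((a+1) + n + 1))^n) := by
      rw [hLdef, map_sum]
      have hterm : ∀ m ∈ range (n+1),
          derivative (Polynomial.C ((((n+2)).choose (m+1) * (m+1)^m : ℕ) : ℚ)
            * (X + Polynomial.C (a + ((n+1-m : ℕ) : ℚ)))^(n+1-m))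
          = Polynomial.C ((n:ℚ)+2) * (Polynomial.C (((n+1).choose (m+1) * (m+1)^m : ℕ) : ℚ)
            * (X + Polynomial.C ((a+1) + ((n-m : ℕ) : ℚ)))^(n-m)) := by
        intro m hm
        have hm' : m ≤ n := by simp at hm; omega
        have e1 : n+1-m = (n-m)+1 := by omega
        have e2 : a + ((n+1-m : ℕ) : ℚ) = (a+1) + ((n-m : ℕ) : ℚ) := by
          rw [Nat.cast_sub (by omega), Nat.cast_sub (by omega)]; push_cast; ring
        rw [derivative_C_mul, derivative_pow, derivative_X_add_C, e2, e1]
        rw [Nat.add_sub_cancel]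
        have hc : ((n+2) * ((n+1).choose (m+1) * (m+1)^m) : ℕ)
            = ((n+2).choose (m+1) * (m+1)^m * ((n-m)+1) : ℕ) := by
          have := Nat.choose_mul_succ_eq (n+1) (m+1)
          have e3 : n+1+1-(m+1) = (n-m)+1 := by omega
          rw [e3] at this
          calc (n+2) * ((n+1).choose (m+1) * (m+1)^m)
              = ((n+1).choose (m+1) * (n+1+1)) * (m+1)^m := by ring
            _ = ((n+2).choose (m+1) * ((n-m)+1)) * (m+1)^m := by rw [this]
            _ = _ := by ring
        have hc' : ((n:ℚ)+2) * (((n+1).choose (m+1) * (m+1)^m : ℕ) : ℚ)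
            = (((n+2).choose (m+1) * (m+1)^m : ℕ) : ℚ) * ((((n-m)+1 : ℕ)) : ℚ) := by
          exact_mod_cast congrArg (fun x : ℕ => (x:ℚ)) hc
        rw [mul_one, ← mul_assoc, ← mul_assoc, ← Polynomial.C_mul, ← Polynomial.C_mul, ← hc']
      rw [Finset.sum_range_succ]
      rw [Finset.sum_congr rfl hterm]
      rw [← Finset.mul_sum, ih (a+1)]
      simp only [Nat.sub_self, pow_zero, mul_one, derivative_C, add_zero]
    have hderR : derivative R = Polynomial.C ((n:ℚ)+2) *
        (Polynomial.C ((n:ℚ)+1) * (X + Polynomial.C ((a+1) + n + 1))^n) := by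
      rw [hRdef, derivative_C_mul, derivative_pow, derivative_X_add_C, Nat.add_sub_cancel]
      have : a + ((n+1:ℕ):ℚ) + 1 = (a+1) + n + 1 := by push_cast; ring
      rw [this]
      push_cast
      ring
    -- evaluation at x0
    set x0 : ℚ := -(a + ((n+1:ℕ):ℚ) + 1) with hx0
    have hevalL : Polynomial.eval x0 L = 0 := by
      rw [hLdef, Polynomial.eval_finset_sum]
      rw [show (0:ℚ) = ∑ m ∈ range (n+2),
        (((n+2).choose (m+1) * (m+1)^m : ℕ) : ℚ) * (-(((m:ℕ):ℚ)+1))^(n+1-m) from (evalzero n).symm]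
      refine Finset.sum_congr rfl (fun m hm => ?_)
      have hm' : m ≤ n+1 := by simp at hm; omega
      simp only [eval_mul, eval_pow, eval_add, eval_C, eval_X]
      have : x0 + (a + ((n+1-m : ℕ) : ℚ)) = -(((m:ℕ):ℚ)+1) := by
        rw [hx0, Nat.cast_sub (by omega)]; push_cast; ring
      rw [this]
    have hevalR : Polynomial.eval x0 R = 0 := by
      rw [hRdef]
      simp only [eval_mul, eval_pow, eval_add, eval_C, eval_X]
      have : x0 + (a + ((n+1:ℕ):ℚ) + 1) = 0 := by rw [hx0]; ring
      rw [this]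
      simp
    -- conclude
    have hD : derivative (L - R) = 0 := by
      rw [derivative_sub, hderL, hderR, sub_self]
    have hC := Polynomial.eq_C_of_derivative_eq_zero hD
    have : (L - R).eval x0 = (L - R).coeff 0 := by rw [hC]; simp
    rw [Polynomial.eval_sub, hevalL, hevalR, sub_self] at this
    have h0 : (L - R).coeff 0 = 0 := this.symm
    have : L - R = 0 := by rw [hC, h0]; simp
    exact sub_eq_zero.mp this

lemma key (n : ℕ) : ∑ m ∈ range (n+1),
    (((n+1).choose (m+1) * (m+1)^m : ℕ) : ℚ) * (((n-m : ℕ) : ℚ))^(n-m)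
    = ((n:ℚ)+1)^(n+1) := by
  have h := congrArg (Polynomial.eval (0:ℚ)) (abel_s1 n 0)
  simp only [Polynomial.eval_finset_sum, eval_mul, eval_pow, eval_add, eval_C, eval_X,
    zero_add] at h
  rw [h, pow_succ]
  ring

lemma conv (N : ℕ) :
    ∑ k ∈ range (N+2), (if k = 0 then 0 else (k:ℚ)^(k-1)/k.factorial) *
      (if N+1-k = 0 then (0:ℚ) else ((N+1-k : ℕ):ℚ)^(N+1-k)/(N+1-k).factorial)
    = ((N+1:ℕ):ℚ)^(N+1)/(N+1).factorial - ((N+1:ℕ):ℚ)^N/(N+1).factorial := by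
  have hkey := key N
  rw [Finset.sum_range_succ] at hkey
  simp only [Nat.sub_self, Nat.cast_zero, pow_zero, mul_one, Nat.choose_self, one_mul] at hkey
  rw [Finset.sum_range_succ', Finset.sum_range_succ]
  have h0 : (if (0:ℕ) = 0 then (0:ℚ) else ((0:ℕ):ℚ)^(0-1)/(Nat.factorial 0)) *
      (if N+1-0 = 0 then (0:ℚ) else ((N+1-0 : ℕ):ℚ)^(N+1-0)/(N+1-0).factorial) = 0 := by
    simp
  have hN : (if (N+1:ℕ) = 0 then (0:ℚ) else ((N+1:ℕ):ℚ)^(N+1-1)/(N+1).factorial) *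
      (if N+1-(N+1) = 0 then (0:ℚ) else ((N+1-(N+1) : ℕ):ℚ)^(N+1-(N+1))/(N+1-(N+1)).factorial) = 0 := by
    simp
  rw [h0, hN, add_zero, add_zero]
  have hterm : ∀ x ∈ range N,
      (if (x+1:ℕ) = 0 then (0:ℚ) else ((x+1:ℕ):ℚ)^(x+1-1)/(x+1).factorial) *
        (if N+1-(x+1) = 0 then (0:ℚ) else ((N+1-(x+1) : ℕ):ℚ)^(N+1-(x+1))/(N+1-(x+1)).factorial)
      = (((N+1).choose (x+1) * (x+1)^x : ℕ) : ℚ) * (((N-x : ℕ):ℚ))^(N-x) / ((N+1).factorial : ℚ) := by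
    intro x hx
    have hx' : x < N := by simpa using hx
    rw [if_neg (Nat.succ_ne_zero x), show N+1-(x+1) = N-x from by omega,
      show x+1-1 = x from by omega, if_neg (show ¬ N-x = 0 by omega)]
    have hcf : ((N+1).choose (x+1) * (x+1).factorial * (N-x).factorial : ℕ) = (N+1).factorial := by
      have := Nat.choose_mul_factorial_mul_factorial (show x+1 ≤ N+1 by omega)
      rwa [show N+1-(x+1) = N-x from by omega] at this
    have hcf' : (((N+1).choose (x+1) : ℕ):ℚ) * ((x+1).factorial : ℚ) * ((N-x).factorial : ℚ)
        = ((N+1).factorial : ℚ) := by exact_mod_cast congrArg (fun t : ℕ => (t:ℚ)) hcf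
    have h1 : ((x+1).factorial : ℚ) ≠ 0 := Nat.cast_ne_zero.mpr (Nat.factorial_pos _).ne'
    have h2 : ((N-x).factorial : ℚ) ≠ 0 := Nat.cast_ne_zero.mpr (Nat.factorial_pos _).ne'
    have h3 : ((N+1).factorial : ℚ) ≠ 0 := Nat.cast_ne_zero.mpr (Nat.factorial_pos _).ne'
    field_simp
    push_cast
    push_cast at hcf'
    linear_combination (-(1+(x:ℚ))^x) * hcf'
  rw [Finset.sum_congr rfl hterm, ← Finset.sum_div]
  have hs : ∑ x ∈ range N, (((N+1).choose (x+1) * (x+1)^x : ℕ) : ℚ) * (((N-x : ℕ):ℚ))^(N-x)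
      = ((N:ℚ)+1)^(N+1) - (((N+1)^N : ℕ) : ℚ) := by linarith [hkey]
  rw [hs]
  push_cast
  ring

theorem one_sub_Y_mul_one_add_Z : (1 - Y) * (1 + Z) = 1 := by
  have hexp : (1 - Y) * (1 + Z) = 1 + (Z - Y - Y * Z) := by ring
  rw [hexp]
  ext n
  rw [map_add, map_sub, map_sub, PowerSeries.coeff_mul,
    Finset.Nat.sum_antidiagonal_eq_sum_range_succ_mk]
  simp only [Y, Z, PowerSeries.coeff_mk]
  cases n with
  | zero => simp
  | succ N =>
    have hc := conv N
    rw [show N.succ.succ = N + 2 from rfl] at *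
    rw [hc]
    simp
end

section
/- If D = q·d/dq is the Euler derivation on formal power series and Z = Σ_{n≥1} n^n q^n / n!, then D(Z) = Z(1+Z)^2. -/
open Finset Polynomial

/-- The Euler derivation `D = q · d/dq`, acting coefficientwise by
`D(Σ a_n q^n) = Σ n·a_n q^n`. -/
noncomputable def D (f : PowerSeries ℚ) : PowerSeries ℚ :=
  PowerSeries.mk fun n => (n : ℚ) * PowerSeries.coeff n f


lemma alt_sum (m : ℕ) : ∀ n : ℕ, m < n →
    ∑ k ∈ range (n + 1), (-1 : ℚ) ^ k * (n.choose k) * (k : ℚ) ^ m = 0 := by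
  induction m using Nat.strong_induction_on with
  | _ m ih =>
    intro n hn
    match m, ih with
    | 0, _ =>
      have h := Int.alternating_sum_range_choose (n := n)
      rw [if_neg (by omega)] at h
      have : ((∑ i ∈ range (n + 1), (-1 : ℤ) ^ i * (n.choose i) : ℤ) : ℚ) = 0 := by
        rw [h]; norm_num
      push_cast at this
      simpa using this
    | m + 1, ih =>
      obtain ⟨n, rfl⟩ : ∃ n', n = n' + 1 := ⟨n - 1, by omega⟩
      rw [Finset.sum_range_succ']
      simp only [Nat.cast_zero, Nat.choose_zero_right, Nat.cast_one, zero_pow (by omega : m + 1 ≠ 0), mul_zero, add_zero]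
      have hterm : ∀ j, (-1 : ℚ) ^ (j + 1) * ((n+1).choose (j+1)) * ((j:ℚ) + 1) ^ (m+1)
          = -((n:ℚ)+1) * ((-1:ℚ)^j * (n.choose j) * ((j:ℚ)+1)^m) := by
        intro j
        have habs : ((n+1).choose (j+1) : ℚ) * ((j:ℚ)+1) = ((n:ℚ)+1) * (n.choose j) := by
          have := Nat.add_one_mul_choose_eq n j
          have : ((n+1) * n.choose j : ℕ) = ((n+1).choose (j+1) * (j+1) : ℕ) := this
          exact_mod_cast (congrArg (Nat.cast : ℕ → ℚ) this).symm
        have : ((j:ℚ)+1)^(m+1) = ((j:ℚ)+1)^m * ((j:ℚ)+1) := by ring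
        rw [this, pow_succ]
        linear_combination ((-1:ℚ)^(j+1) * ((j:ℚ)+1)^m) * habs
      push_cast
      rw [Finset.sum_congr rfl (fun j _ => by push_cast; exact hterm j)]
      rw [← Finset.mul_sum]
      have hexp : ∀ j : ℕ, ((j:ℚ)+1)^m = ∑ t ∈ range (m+1), (m.choose t) * (j:ℚ)^t := by
        intro j
        rw [add_pow]
        apply Finset.sum_congr rfl
        intro t _
        ring
      have : ∑ j ∈ range (n+1), (-1:ℚ)^j * (n.choose j) * ((j:ℚ)+1)^m = 0 := by
        calc ∑ j ∈ range (n+1), (-1:ℚ)^j * (n.choose j) * ((j:ℚ)+1)^m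
            = ∑ j ∈ range (n+1), ∑ t ∈ range (m+1), (m.choose t) * ((-1:ℚ)^j * (n.choose j) * (j:ℚ)^t) := by
              apply Finset.sum_congr rfl; intro j _; rw [hexp j, Finset.mul_sum]
              apply Finset.sum_congr rfl; intro t _; ring
          _ = ∑ t ∈ range (m+1), (m.choose t : ℚ) * ∑ j ∈ range (n+1), (-1:ℚ)^j * (n.choose j) * (j:ℚ)^t := by
              rw [Finset.sum_comm]; simp [Finset.mul_sum]
          _ = 0 := by
              apply Finset.sum_eq_zero; intro t ht
              simp only [Finset.mem_range] at ht
              rw [ih t (by omega) n (by omega), mul_zero]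
      rw [this, mul_zero]

lemma choose_id (n k : ℕ) (hk : k ≤ n) :
    ((n + 1 - k : ℕ) : ℚ) * ((n+1).choose k) = ((n : ℚ) + 1) * (n.choose k) := by
  have h1 : ((n+1).choose k : ℚ) = (n+1).factorial / (k.factorial * (n + 1 - k).factorial) :=
    Nat.cast_choose ℚ (by omega)
  have h2 : ((n).choose k : ℚ) = n.factorial / (k.factorial * (n - k).factorial) :=
    Nat.cast_choose ℚ hk
  have h3 : (n + 1 - k) = (n - k) + 1 := by omega
  have h4 : ((n+1-k).factorial : ℚ) = ((n+1-k) : ℕ) * (n-k).factorial := by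
    rw [h3, Nat.factorial_succ]; push_cast [h3]; ring
  have h5 : ((n+1).factorial : ℚ) = ((n:ℚ)+1) * n.factorial := by
    rw [Nat.factorial_succ]; push_cast; ring
  have hk0 : (k.factorial : ℚ) ≠ 0 := by positivity
  have hnk0 : ((n-k).factorial : ℚ) ≠ 0 := by positivity
  have hx : ((n+1-k : ℕ) : ℚ) ≠ 0 := by
    have h : 0 < n + 1 - k := by omega
    exact_mod_cast h.ne'
  rw [h1, h2, h4, h5]
  field_simp

/-- The Abel-type polynomial sum. -/
noncomputable def P (n : ℕ) (a : ℚ) : Polynomial ℚ :=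
  ∑ k ∈ Icc 1 n, C ((n.choose k : ℚ) * (k : ℚ) ^ (k - 1)) * (X + C (a + (n - k : ℕ))) ^ (n - k)

lemma poly_eq (n : ℕ) : 1 ≤ n → ∀ a : ℚ, P n a = C ((n : ℚ)) * (X + C (a + n)) ^ (n - 1) := by
  induction n with
  | zero => omega
  | succ n ih =>
    intro _ a
    rcases Nat.eq_zero_or_pos n with rfl | hn
    · simp [P]
    -- derivative computation
    have hDP : derivative (P (n+1) a) = C ((n : ℚ) + 1) * P n (a + 1) := by
      unfold P
      rw [map_sum, Finset.mul_sum, Finset.sum_Icc_succ_top (by omega : 1 ≤ n + 1)]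
      rw [Nat.sub_self, pow_zero, mul_one, derivative_C, add_zero]
      apply Finset.sum_congr rfl
      intro k hk
      simp only [Finset.mem_Icc] at hk
      have hk1 : 1 ≤ k := hk.1
      have hkn : k ≤ n := hk.2
      rw [derivative_mul, derivative_C, zero_mul, zero_add, derivative_pow,
        derivative_add, derivative_X, derivative_C, add_zero, mul_one]
      have e1 : (n + 1 - k) - 1 = n - k := by omega
      have e2 : (a + ((n + 1 - k : ℕ) : ℚ)) = (a + 1) + ((n - k : ℕ) : ℚ) := by
        push_cast [Nat.cast_sub (by omega : k ≤ n + 1), Nat.cast_sub hkn]; ring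
      rw [e1, e2]
      rw [← mul_assoc, ← mul_assoc, ← C_mul, ← C_mul]
      congr 1
      rw [C_inj]
      linear_combination ((k:ℚ)^(k-1)) * choose_id n k hkn
    -- derivatives agree
    have hD2 : derivative (P (n+1) a)
        = derivative (C (((n+1 : ℕ) : ℚ)) * (X + C (a + ((n+1 : ℕ) : ℚ))) ^ ((n+1) - 1)) := by
      rw [hDP, ih hn (a+1)]
      rw [derivative_mul, derivative_C, zero_mul, zero_add, derivative_pow]
      simp only [derivative_add, derivative_X, derivative_C, add_zero, mul_one,
        Nat.add_sub_cancel]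
      rw [show ((n+1:ℕ):ℚ) = (n:ℚ)+1 from by push_cast; ring,
        show a + ((n:ℚ)+1) = a + 1 + (n:ℚ) from by ring]
    set t : ℚ := -(a + ((n+1 : ℕ) : ℚ)) with ht
    have heval1 : eval t (P (n+1) a) = 0 := by
      unfold P
      rw [eval_finset_sum]
      have hterm : ∀ k ∈ Icc 1 (n+1),
          eval t (C (((n+1).choose k : ℚ) * (k:ℚ)^(k-1)) * (X + C (a + ((n+1-k : ℕ) : ℚ))) ^ (n+1-k))
          = (-1:ℚ)^(n+1) * ((-1:ℚ)^k * ((n+1).choose k : ℚ) * (k:ℚ)^n) := by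
        intro k hk
        simp only [Finset.mem_Icc] at hk
        simp only [eval_mul, eval_C, eval_pow, eval_add, eval_X]
        have hbase : t + (a + ((n+1-k : ℕ) : ℚ)) = -(k : ℚ) := by
          rw [ht, Nat.cast_sub (by omega : k ≤ n + 1)]
          push_cast; ring
        rw [hbase, neg_pow]
        have e4 : (k - 1) + (n + 1 - k) = n := by omega
        have e3 : (n + 1 - k) + k = n + 1 := by omega
        have h1 : (-1:ℚ)^(n+1-k) * (-1:ℚ)^k = (-1)^(n+1) := by rw [← pow_add, e3]
        have hsq : ((-1:ℚ)^k) * ((-1:ℚ)^k) = 1 := by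
          rw [← pow_add]; exact Even.neg_one_pow ⟨k, rfl⟩
        have h2 : (-1:ℚ)^(n+1-k) = (-1:ℚ)^(n+1) * (-1)^k := by
          calc (-1:ℚ)^(n+1-k) = (-1:ℚ)^(n+1-k) * (((-1:ℚ)^k) * ((-1:ℚ)^k)) := by rw [hsq, mul_one]
            _ = ((-1:ℚ)^(n+1-k) * (-1:ℚ)^k) * (-1)^k := by ring
            _ = (-1:ℚ)^(n+1) * (-1)^k := by rw [h1]
        have h3 : (k:ℚ)^(k-1) * (k:ℚ)^(n+1-k) = (k:ℚ)^n := by rw [← pow_add, e4]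
        rw [h2]
        calc ((n+1).choose k : ℚ) * (k:ℚ)^(k-1) * ((-1:ℚ)^(n+1) * (-1)^k * (k:ℚ)^(n+1-k))
            = ((-1:ℚ)^(n+1) * (-1)^k) * (((n+1).choose k : ℚ) * ((k:ℚ)^(k-1) * (k:ℚ)^(n+1-k))) := by ring
          _ = (-1:ℚ)^(n+1) * ((-1:ℚ)^k * ((n+1).choose k : ℚ) * (k:ℚ)^n) := by rw [h3]; ring
      rw [Finset.sum_congr rfl hterm, ← Finset.mul_sum]
      have halt := alt_sum n (n+1) (by omega)
      have hsum : ∑ k ∈ Icc 1 (n+1), ((-1:ℚ)^k * ((n+1).choose k : ℚ) * (k:ℚ)^n)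
          = ∑ k ∈ range (n+1+1), ((-1:ℚ)^k * ((n+1).choose k : ℚ) * (k:ℚ)^n) := by
        rw [Finset.sum_range_succ']
        rw [(Finset.Ico_add_one_right_eq_Icc 1 (n+1)).symm, Finset.sum_Ico_eq_sum_range]
        simp only [show n + 1 + 1 - 1 = n + 1 from rfl]
        rw [show ((0:ℕ):ℚ)^n = 0 from by rw [Nat.cast_zero]; exact zero_pow (by omega)]
        simp only [mul_zero, add_zero]
        apply Finset.sum_congr rfl
        intro i _
        rw [add_comm 1 i]
      rw [hsum, halt, mul_zero]
    have heval2 : eval t (C (((n+1 : ℕ) : ℚ)) * (X + C (a + ((n+1 : ℕ) : ℚ))) ^ ((n+1) - 1)) = 0 := by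
      rw [eval_mul, eval_C, eval_pow, eval_add, eval_X, eval_C, ht]
      rw [show -(a + ((n+1 : ℕ) : ℚ)) + (a + ((n+1 : ℕ) : ℚ)) = 0 from by ring]
      rw [Nat.add_sub_cancel, zero_pow (by omega : n ≠ 0), mul_zero]
    have hdz : derivative (P (n+1) a - C (((n+1 : ℕ) : ℚ)) * (X + C (a + ((n+1 : ℕ) : ℚ))) ^ ((n+1) - 1)) = 0 := by
      rw [derivative_sub, hD2, sub_self]
    obtain ⟨c, hc⟩ := natDegree_eq_zero.mp (natDegree_eq_zero_of_derivative_eq_zero hdz)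
    have hc0 : c = 0 := by
      have := congrArg (eval t) hc
      rw [eval_C, eval_sub, heval1, heval2, sub_self] at this
      exact this
    rw [hc0, map_zero] at hc
    exact sub_eq_zero.mp hc.symm

noncomputable def Yser : PowerSeries ℚ :=
  PowerSeries.mk fun n => if n = 0 then 0 else (n : ℚ) ^ (n - 1) / n.factorial

lemma coeff_D (f : PowerSeries ℚ) (n : ℕ) :
    PowerSeries.coeff n (D f) = (n : ℚ) * PowerSeries.coeff n f :=
  PowerSeries.coeff_mk n _

lemma D_one : D 1 = 0 := by
  ext n
  rw [coeff_D, PowerSeries.coeff_one, map_zero]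
  rcases Nat.eq_zero_or_pos n with rfl | hn
  · simp
  · rw [if_neg (by omega), mul_zero]

lemma D_sub (f g : PowerSeries ℚ) : D (f - g) = D f - D g := by
  ext n
  rw [map_sub, coeff_D, coeff_D, coeff_D, map_sub, mul_sub]

lemma D_mul (f g : PowerSeries ℚ) : D (f * g) = D f * g + f * D g := by
  ext n
  rw [map_add, coeff_D, PowerSeries.coeff_mul, PowerSeries.coeff_mul, PowerSeries.coeff_mul,
    Finset.mul_sum, ← Finset.sum_add_distrib]
  apply Finset.sum_congr rfl
  intro p hp
  rw [Finset.HasAntidiagonal.mem_antidiagonal] at hp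
  rw [coeff_D, coeff_D, ← hp]
  push_cast
  ring

lemma D_Yser : D Yser = Z := by
  ext n
  rw [coeff_D, Yser, Z, PowerSeries.coeff_mk, PowerSeries.coeff_mk]
  rcases Nat.eq_zero_or_pos n with rfl | hn
  · simp
  · rw [if_neg (by omega), if_neg (by omega)]
    rw [show (n:ℚ) * ((n:ℚ)^(n-1)/ n.factorial) = (n:ℚ)^(n-1) * (n:ℚ) / n.factorial from by ring,
      ← pow_succ, show n - 1 + 1 = n from by omega]

lemma STAR (n : ℕ) (hn : 1 ≤ n) :
    ∑ k ∈ Icc 1 n, (n.choose k : ℚ) * (k : ℚ) ^ (k - 1) * ((n - k : ℕ) : ℚ) ^ (n - k)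
      = (n : ℚ) ^ n := by
  have h2 := congrArg (Polynomial.eval 0) (poly_eq n hn 0)
  simp only [P, Polynomial.eval_finset_sum, Polynomial.eval_mul, Polynomial.eval_C,
    Polynomial.eval_pow, Polynomial.eval_add, Polynomial.eval_X, zero_add] at h2
  rw [h2, ← pow_succ', show n - 1 + 1 = n from by omega]

lemma key0 : Z = Yser + Yser * Z := by
  ext n
  rw [map_add, PowerSeries.coeff_mul, Finset.Nat.sum_antidiagonal_eq_sum_range_succ_mk]
  rcases Nat.eq_zero_or_pos n with rfl | hn
  · simp [Z, Yser]
  obtain ⟨m, rfl⟩ : ∃ m, n = m + 1 := ⟨n - 1, by omega⟩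
  rw [Finset.sum_range_succ, Finset.sum_range_succ']
  have hz0 : PowerSeries.coeff (m + 1 - (m+1)) Z = 0 := by simp [Z]
  have hy0 : PowerSeries.coeff 0 Yser = 0 := by simp [Yser]
  rw [hz0, hy0, mul_zero, zero_mul, add_zero, add_zero]
  have hterm : ∀ i ∈ range m,
      PowerSeries.coeff (i+1) Yser * PowerSeries.coeff (m + 1 - (i+1)) Z
      = ((m+1).choose (i+1) : ℚ) * ((i+1 : ℕ) : ℚ) ^ (i+1-1) * ((m+1-(i+1) : ℕ) : ℚ) ^ (m+1-(i+1))
        / (m+1).factorial := by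
    intro i hi
    rw [Finset.mem_range] at hi
    rw [Yser, Z, PowerSeries.coeff_mk, PowerSeries.coeff_mk,
      if_neg (by omega), if_neg (by omega : ¬ (m + 1 - (i+1) = 0))]
    rw [Nat.cast_choose ℚ (by omega : i + 1 ≤ m + 1)]
    have h1 : ((i+1).factorial : ℚ) ≠ 0 := by positivity
    have h2 : (((m+1) - (i+1)).factorial : ℚ) ≠ 0 := by positivity
    have h3 : (((m+1)).factorial : ℚ) ≠ 0 := by positivity
    field_simp
  rw [Finset.sum_congr rfl hterm]
  -- now relate to STAR
  have hstar := STAR (m+1) (by omega)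
  have hsplit : ∑ k ∈ Icc 1 (m+1), ((m+1).choose k : ℚ) * (k : ℚ) ^ (k - 1) * ((m+1 - k : ℕ) : ℚ) ^ (m+1 - k)
      = (∑ i ∈ range m, ((m+1).choose (i+1) : ℚ) * ((i+1 : ℕ) : ℚ) ^ (i+1-1) * ((m+1-(i+1) : ℕ) : ℚ) ^ (m+1-(i+1)))
        + ((m+1 : ℕ) : ℚ) ^ m := by
    rw [Finset.sum_Icc_succ_top (by omega : 1 ≤ m + 1)]
    congr 1
    · rw [show Icc 1 m = Ico 1 (m+1) from (Finset.Ico_add_one_right_eq_Icc 1 m).symm, Finset.sum_Ico_eq_sum_range]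
      simp only [show m + 1 - 1 = m from rfl]
      apply Finset.sum_congr rfl
      intro i _
      rw [add_comm 1 i]
    · simp
  rw [hsplit] at hstar
  -- goal : coeff Z = coeff Yser + sum
  rw [Z, Yser, PowerSeries.coeff_mk, PowerSeries.coeff_mk, if_neg (by omega), if_neg (by omega)]
  have h3 : (((m+1)).factorial : ℚ) ≠ 0 := by positivity
  rw [← Finset.sum_div]
  rw [show (∑ i ∈ range m, ((m+1).choose (i+1) : ℚ) * ((i+1 : ℕ) : ℚ) ^ (i+1-1) * ((m+1-(i+1) : ℕ) : ℚ) ^ (m+1-(i+1)))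
      = ((m+1 : ℕ) : ℚ)^(m+1) - ((m+1 : ℕ) : ℚ)^m from by linarith [hstar]]
  rw [Nat.add_sub_cancel]
  ring

lemma D_add (f g : PowerSeries ℚ) : D (f + g) = D f + D g := by
  ext n
  rw [map_add, coeff_D, coeff_D, coeff_D, map_add, mul_add]

theorem D_Z : D Z = Z * (1 + Z) ^ 2 := by
  have key : (1 - Yser) * (1 + Z) = 1 := by linear_combination key0
  have hD : D ((1 - Yser) * (1 + Z)) = 0 := by rw [key, D_one]
  rw [D_mul] at hD
  have h1 : D (1 - Yser) = -Z := by rw [D_sub, D_one, D_Yser]; ring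
  have h2 : D (1 + Z) = D Z := by rw [D_add, D_one, zero_add]
  rw [h1, h2] at hD
  have h3 : (1 - Yser) * D Z = Z * (1 + Z) := by linear_combination hD
  calc D Z = ((1 - Yser) * (1 + Z)) * D Z := by rw [key, one_mul]
    _ = (1 + Z) * ((1 - Yser) * D Z) := by ring
    _ = (1 + Z) * (Z * (1 + Z)) := by rw [h3]
    _ = Z * (1 + Z)^2 := by ring
end
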